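/- arXiv:2302.13355 — 3 statements merged into one kernel-verified Lean document; each statement's English description precedes it below -/
import Mathlib

section
/- Let H be a real inner product space with dim H ≥ 3 (i.e. the rank of H over ℝ is at least 3). Let ξ, η be unit vectors in H with ⟪ξ, η⟫ = c, and let r be a real number with 2c² − 1 ≤ r ≤ 1. Then there exists a unit vector η′ in H such that ⟪ξ, η′⟫ = c and ⟪η, η′⟫ = r. -/
/-!
Let `u` be a unit vector orthogonal to `ξ` and `η` (it exists since `dim H ≥ 3`). For `|t| ≤ 1`
the unit vectors `c ξ + t (η - c ξ) + √(1 - c²) √(1 - t²) u` all have inner product `c` with `ξ`,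
and inner product `c² + t (1 - c²)` with `η`; as `t` runs over `[-1, 1]` the latter runs over
`[2c² - 1, 1]`.
-/

open RealInnerProductSpace

section

variable {H : Type*} [NormedAddCommGroup H] [InnerProductSpace ℝ H]

theorem exists_norm_eq_one_forall_inner_eq_zero (s : Finset H)
    (hs : (s.card : Cardinal) < Module.rank ℝ H) :
    ∃ u : H, ‖u‖ = 1 ∧ ∀ x ∈ s, ⟪x, u⟫ = 0 := by
  set K := Submodule.span ℝ (s : Set H)
  have hK : K ≠ ⊤ := fun hK => by
    have : Module.rank ℝ K < Module.rank ℝ H := (rank_span_finset_le s).trans_lt hs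
    rw [hK, rank_top] at this
    exact lt_irrefl _ this
  obtain ⟨v, hvK, hv⟩ := (Submodule.ne_bot_iff _).1 (mt Submodule.orthogonal_eq_bot_iff.1 hK)
  refine ⟨‖v‖⁻¹ • v, norm_smul_inv_norm hv, fun x hx => ?_⟩
  rw [real_inner_smul_right,
    (Submodule.mem_orthogonal K v).1 hvK x (Submodule.subset_span hx), mul_zero]

theorem exists_norm_eq_one_inner_eq_zero_inner_eq_zero (hdim : 3 ≤ Module.rank ℝ H) (x y : H) :
    ∃ u : H, ‖u‖ = 1 ∧ ⟪x, u⟫ = 0 ∧ ⟪y, u⟫ = 0 := by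
  classical
  have hcard : (({x, y} : Finset H).card : Cardinal) < Module.rank ℝ H :=
    calc (({x, y} : Finset H).card : Cardinal) ≤ 2 := by exact_mod_cast Finset.card_le_two
      _ < 3 := by norm_num
      _ ≤ Module.rank ℝ H := hdim
  obtain ⟨u, hu, hxy⟩ := exists_norm_eq_one_forall_inner_eq_zero _ hcard
  exact ⟨u, hu, hxy x (by simp), hxy y (by simp)⟩

theorem sq_real_inner_le_one {x y : H} (hx : ‖x‖ = 1) (hy : ‖y‖ = 1) : ⟪x, y⟫ ^ 2 ≤ 1 := by
  rw [sq_le_one_iff_abs_le_one]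
  simpa [hx, hy] using abs_real_inner_le_norm x y

theorem exists_norm_eq_one_inner_eq_add_mul {ξ η u : H} (hξ : ‖ξ‖ = 1) (hη : ‖η‖ = 1)
    (hu : ‖u‖ = 1) (hξu : ⟪ξ, u⟫ = 0) (hηu : ⟪η, u⟫ = 0) {t : ℝ} (ht : |t| ≤ 1) :
    ∃ w : H, ‖w‖ = 1 ∧ ⟪ξ, w⟫ = ⟪ξ, η⟫ ∧ ⟪η, w⟫ = ⟪ξ, η⟫ ^ 2 + t * (1 - ⟪ξ, η⟫ ^ 2) := by
  set c := ⟪ξ, η⟫ with hc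
  have hξξ : ⟪ξ, ξ⟫ = 1 := by rw [real_inner_self_eq_norm_sq, hξ, one_pow]
  have hηη : ⟪η, η⟫ = 1 := by rw [real_inner_self_eq_norm_sq, hη, one_pow]
  have huu : ⟪u, u⟫ = 1 := by rw [real_inner_self_eq_norm_sq, hu, one_pow]
  have hηξ : ⟪η, ξ⟫ = c := real_inner_comm ξ η
  have huξ : ⟪u, ξ⟫ = 0 := by rw [real_inner_comm, hξu]
  have huη : ⟪u, η⟫ = 0 := by rw [real_inner_comm, hηu]
  have hs : √(1 - c ^ 2) ^ 2 = 1 - c ^ 2 :=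
    Real.sq_sqrt (by linarith [sq_real_inner_le_one hξ hη])
  have hs' : √(1 - t ^ 2) ^ 2 = 1 - t ^ 2 :=
    Real.sq_sqrt (by linarith [(sq_le_one_iff_abs_le_one t).2 ht])
  refine ⟨c • ξ + t • (η - c • ξ) + (√(1 - c ^ 2) * √(1 - t ^ 2)) • u, ?_, ?_, ?_⟩
  · rw [norm_eq_sqrt_real_inner, Real.sqrt_eq_one]
    simp only [inner_add_left, inner_add_right, inner_sub_left, inner_sub_right,
      real_inner_smul_left, real_inner_smul_right, hξξ, hηη, huu, hηξ, ← hc, hξu, hηu, huξ,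
      huη]
    linear_combination √(1 - t ^ 2) ^ 2 * hs + (1 - c ^ 2) * hs'
  · simp only [inner_add_right, inner_sub_right, real_inner_smul_right, hξξ, ← hc, hξu]
    ring
  · simp only [inner_add_right, inner_sub_right, real_inner_smul_right, hηη, hηξ, hηu]
    ring

end

theorem exists_abs_le_one_eq_add_mul {a r : ℝ} (ha : a ≤ 1) (hr1 : 2 * a - 1 ≤ r)
    (hr2 : r ≤ 1) :
    ∃ t : ℝ, |t| ≤ 1 ∧ r = a + t * (1 - a) := by
  rcases ha.eq_or_lt with rfl | ha
  · exact ⟨0, by simp, by linarith⟩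
  have h : 0 < 1 - a := by linarith
  refine ⟨(r - a) / (1 - a), abs_le.2 ⟨?_, ?_⟩, by field_simp; ring⟩
  · rw [le_div_iff₀ h]; linarith
  · rw [div_le_one h]; linarith

theorem exists_unit_vector_with_inner
    {H : Type*} [NormedAddCommGroup H] [InnerProductSpace ℝ H]
    (hdim : 3 ≤ Module.rank ℝ H)
    (ξ η : H) (hξ : ‖ξ‖ = 1) (hη : ‖η‖ = 1)
    (c : ℝ) (hc : ⟪ξ, η⟫ = c)
    (r : ℝ) (hr1 : 2 * c ^ 2 - 1 ≤ r) (hr2 : r ≤ 1) :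
    ∃ η' : H, ‖η'‖ = 1 ∧ ⟪ξ, η'⟫ = c ∧ ⟪η, η'⟫ = r := by
  obtain ⟨u, hu, hξu, hηu⟩ := exists_norm_eq_one_inner_eq_zero_inner_eq_zero hdim ξ η
  obtain ⟨t, ht, rfl⟩ := exists_abs_le_one_eq_add_mul (hc ▸ sq_real_inner_le_one hξ hη) hr1 hr2
  subst hc
  exact exists_norm_eq_one_inner_eq_add_mul hξ hη hu hξu hηu ht
end

section
/- Let H be a real inner product space with dim H ≥ 3, and let S be a binary relation on H satisfying the following closure property: for all unit vectors ξ, η, η′ in H with ⟪ξ, η⟫ = ⟪ξ, η′⟫, if S(ξ, η) holds then S(η, η′) holds. Suppose k ≥ 1 is a natural number and ξ, η are unit vectors with S(ξ, η) and ⟪ξ, η⟫ = cos(π / 2^k). Then there exist unit vectors ξ₁, η₁ in H with S(ξ₁, η₁) and ⟪ξ₁, η₁⟫ = cos(π / 2^(k−1)). -/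
open RealInnerProductSpace Real

theorem angle_doubling_step
    {H : Type*} [NormedAddCommGroup H] [InnerProductSpace ℝ H]
    (hdim : 3 ≤ Module.rank ℝ H)
    (S : H → H → Prop)
    (hS : ∀ ξ η η' : H, ‖ξ‖ = 1 → ‖η‖ = 1 → ‖η'‖ = 1 →
      ⟪ξ, η⟫ = ⟪ξ, η'⟫ → S ξ η → S η η')
    (k : ℕ) (hk : 1 ≤ k)
    (ξ η : H) (hξ : ‖ξ‖ = 1) (hη : ‖η‖ = 1)
    (hSξη : S ξ η) (hangle : ⟪ξ, η⟫ = Real.cos (π / 2 ^ k)) :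
    ∃ ξ₁ η₁ : H, ‖ξ₁‖ = 1 ∧ ‖η₁‖ = 1 ∧ S ξ₁ η₁ ∧
      ⟪ξ₁, η₁⟫ = Real.cos (π / 2 ^ (k - 1)) := by
  set c : ℝ := Real.cos (π / 2 ^ k) with hc
  set η' : H := (2 * c) • ξ - η with hη'def
  have hξξ : ⟪ξ, ξ⟫ = 1 := by
    rw [real_inner_self_eq_norm_sq, hξ]; norm_num
  have hηη : ⟪η, η⟫ = 1 := by
    rw [real_inner_self_eq_norm_sq, hη]; norm_num
  have hηξ : ⟪η, ξ⟫ = c := by rw [real_inner_comm]; exact hangle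
  have hinner' : ⟪η', η'⟫ = 1 := by
    simp only [hη'def, inner_sub_left, inner_sub_right, inner_smul_left,
      inner_smul_right, RCLike.ofReal_real_eq_id, id_eq, conj_trivial, hξξ, hηη, hηξ, hangle]
    ring
  have hη'norm : ‖η'‖ = 1 := by
    have := real_inner_self_eq_norm_sq η'
    rw [hinner'] at this
    nlinarith [norm_nonneg η']
  have hξη' : ⟪ξ, η'⟫ = c := by
    simp only [hη'def, inner_sub_right, inner_smul_right, hξξ, hangle]
    ring
  have hηη' : ⟪η, η'⟫ = Real.cos (π / 2 ^ (k - 1)) := by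
    have h2 : π / 2 ^ (k - 1) = 2 * (π / 2 ^ k) := by
      have : (2:ℝ) ^ k = 2 * 2 ^ (k - 1) := by
        rw [← pow_succ']
        congr 1
        omega
      rw [this]
      field_simp
    rw [h2, Real.cos_two_mul, ← hc]
    simp only [hη'def, inner_sub_right, inner_smul_right, hηξ, hηη]
    ring
  exact ⟨η, η', hη, hη'norm, hS ξ η η' hξ hη hη'norm (hangle.trans hξη'.symm) hSξη, hηη'⟩
end

section
/- Let H be a real inner product space with dim H ≥ 3, and let S be a binary relation on H satisfying the following closure property: for all unit vectors ξ, η, η′ in H with ⟪ξ, η⟫ = ⟪ξ, η′⟫, if S(ξ, η) holds then S(η, η′) holds. If there exist unit vectors ξ, η in H with S(ξ, η), η ≠ ξ and η ≠ −ξ, then there exist unit vectors ξ₁, η₁ in H with S(ξ₁, η₁) and ⟪ξ₁, η₁⟫ = 0. -/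
open RealInnerProductSpace

section Aux
variable {H : Type*} [NormedAddCommGroup H] [InnerProductSpace ℝ H]

private lemma exists_unit_orthog (hdim : 3 ≤ Module.rank ℝ H) (x y : H) :
    ∃ w : H, ‖w‖ = 1 ∧ ⟪x, w⟫ = 0 ∧ ⟪y, w⟫ = 0 := by
  set K := Submodule.span ℝ ({x, y} : Set H) with hKdef
  have hfd : FiniteDimensional ℝ K :=
    FiniteDimensional.span_of_finite ℝ (Set.toFinite _)
  have hne : Kᗮ ≠ ⊥ := by
    intro hbot
    have hK : K = ⊤ := (Submodule.orthogonal_eq_bot_iff).mp hbot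
    have h1 : Module.rank ℝ K ≤ Cardinal.mk ({x, y} : Set H) := rank_span_le _
    have h2 : Cardinal.mk ({x, y} : Set H) ≤ 2 := by
      calc Cardinal.mk ({x, y} : Set H) ≤ Cardinal.mk ({y} : Set H) + 1 :=
            Cardinal.mk_insert_le
        _ ≤ 2 := by rw [Cardinal.mk_singleton]; norm_num
    rw [hK, rank_top] at h1
    have := h1.trans h2
    have := hdim.trans this
    norm_num at this
  obtain ⟨w, hwK, hw0⟩ := Submodule.exists_mem_ne_zero_of_ne_bot hne
  refine ⟨‖w‖⁻¹ • w, ?_, ?_, ?_⟩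
  · rw [norm_smul, norm_inv, norm_norm, inv_mul_cancel₀ (norm_ne_zero_iff.mpr hw0)]
  · rw [real_inner_smul_right]
    have := (Submodule.mem_orthogonal K w).mp hwK x (Submodule.subset_span (by simp))
    rw [real_inner_comm] at this ⊢
    simp [this]
  · rw [real_inner_smul_right]
    have := (Submodule.mem_orthogonal K w).mp hwK y (Submodule.subset_span (by simp))
    rw [real_inner_comm] at this ⊢
    simp [this]

set_option maxHeartbeats 1000000 in
private lemma step_exists (hdim : 3 ≤ Module.rank ℝ H) (ξ η : H)
    (hξ : ‖ξ‖ = 1) (hη : ‖η‖ = 1) (s : ℝ)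
    (hs1 : 2 * ⟪ξ, η⟫ ^ 2 - 1 ≤ s) (hs2 : s ≤ 1) :
    ∃ η' : H, ‖η'‖ = 1 ∧ ⟪ξ, η'⟫ = ⟪ξ, η⟫ ∧ ⟪η, η'⟫ = s := by
  obtain ⟨t, ht⟩ : ∃ t : ℝ, ⟪ξ, η⟫ = t := ⟨_, rfl⟩
  rw [ht] at hs1 ⊢
  have hξξ : ⟪ξ, ξ⟫ = 1 := by
    rw [real_inner_self_eq_norm_sq, hξ]; norm_num
  have hηη : ⟪η, η⟫ = 1 := by
    rw [real_inner_self_eq_norm_sq, hη]; norm_num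
  have hηξ : ⟪η, ξ⟫ = t := by rw [real_inner_comm]; exact ht
  have htle : t ^ 2 ≤ 1 := by
    have := abs_real_inner_le_norm ξ η
    rw [hξ, hη, ht] at this
    nlinarith [abs_nonneg t, sq_abs t]
  by_cases h1 : t ^ 2 = 1
  · have hs : s = 1 := le_antisymm hs2 (by nlinarith)
    exact ⟨η, hη, ht, by rw [hs, hηη]⟩
  have h1' : t ^ 2 < 1 := lt_of_le_of_ne htle h1
  have hpos : (0:ℝ) < 1 - t ^ 2 := by linarith
  obtain ⟨r, hrdef⟩ : ∃ r : ℝ, r = Real.sqrt (1 - t ^ 2) := ⟨_, rfl⟩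
  have hr2 : r ^ 2 = 1 - t ^ 2 := by rw [hrdef]; exact Real.sq_sqrt (by linarith)
  have hrpos : (0:ℝ) < r := by rw [hrdef]; positivity
  obtain ⟨c, hcdef⟩ : ∃ c : ℝ, c = (s - t ^ 2) / (1 - t ^ 2) := ⟨_, rfl⟩
  have hc' : c * (1 - t ^ 2) = s - t ^ 2 := by
    rw [hcdef]; field_simp
  have hc2 : c ^ 2 ≤ 1 := by
    rw [hcdef, div_pow, div_le_one (by positivity)]
    nlinarith
  obtain ⟨q, hqdef⟩ : ∃ q : ℝ, q = Real.sqrt (1 - c ^ 2) := ⟨_, rfl⟩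
  have hq2 : q ^ 2 = 1 - c ^ 2 := by rw [hqdef]; exact Real.sq_sqrt (by linarith)
  have hmain : ∃ e w : H, ⟪e, e⟫ = 1 ∧ ⟪w, w⟫ = 1 ∧ ⟪ξ, e⟫ = 0 ∧ ⟪ξ, w⟫ = 0 ∧
      ⟪e, w⟫ = 0 ∧ ⟪η, e⟫ = r ∧ ⟪η, w⟫ = 0 := by
    have hξv : ⟪ξ, η - t • ξ⟫ = 0 := by
      rw [inner_sub_right, real_inner_smul_right, ht, hξξ]; ring
    have hηv : ⟪η, η - t • ξ⟫ = r ^ 2 := by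
      rw [inner_sub_right, real_inner_smul_right, hηη, hηξ, hr2]; ring
    have hvv : ⟪η - t • ξ, η - t • ξ⟫ = r ^ 2 := by
      rw [inner_sub_left, real_inner_smul_left, hηv, hξv]
      ring
    obtain ⟨w, hw1, hξw, hvw⟩ := exists_unit_orthog hdim ξ (η - t • ξ)
    refine ⟨r⁻¹ • (η - t • ξ), w, ?_, ?_, ?_, hξw, ?_, ?_, ?_⟩
    · rw [real_inner_smul_left, real_inner_smul_right, hvv]
      field_simp
    · rw [real_inner_self_eq_norm_sq, hw1]; norm_num
    · rw [real_inner_smul_right, hξv, mul_zero]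
    · rw [real_inner_smul_left, hvw, mul_zero]
    · rw [real_inner_smul_right, hηv, pow_two]
      field_simp
    · have h3 := hvw
      rw [inner_sub_left, real_inner_smul_left, hξw] at h3
      linarith
  obtain ⟨e, w, hee, hww, hξe, hξw, hew, hηe, hηw⟩ := hmain
  have heξ : ⟪e, ξ⟫ = 0 := by rw [real_inner_comm]; exact hξe
  have hwξ : ⟪w, ξ⟫ = 0 := by rw [real_inner_comm]; exact hξw
  have hwe : ⟪w, e⟫ = 0 := by rw [real_inner_comm]; exact hew
  refine ⟨t • ξ + (r * c) • e + (r * q) • w, ?_, ?_, ?_⟩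
  · have hn : ⟪t • ξ + (r * c) • e + (r * q) • w,
        t • ξ + (r * c) • e + (r * q) • w⟫ = 1 := by
      simp only [inner_add_left, inner_add_right, real_inner_smul_left,
        real_inner_smul_right, hξξ, hee, hww, hξe, hξw, hew, heξ, hwξ, hwe]
      linear_combination hr2 + r ^ 2 * hq2
    have h2 : ‖t • ξ + (r * c) • e + (r * q) • w‖ ^ 2 = 1 := by
      rw [← real_inner_self_eq_norm_sq]; exact hn
    nlinarith [norm_nonneg (t • ξ + (r * c) • e + (r * q) • w)]
  · simp only [inner_add_right, real_inner_smul_right, hξξ, hξe, hξw]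
    ring
  · simp only [inner_add_right, real_inner_smul_right, hηξ, hηe, hηw]
    linear_combination hc' + c * hr2

private lemma key_induction (hdim : 3 ≤ Module.rank ℝ H)
    (S : H → H → Prop)
    (hS : ∀ ξ η η' : H, ‖ξ‖ = 1 → ‖η‖ = 1 → ‖η'‖ = 1 →
      ⟪ξ, η⟫ = ⟪ξ, η'⟫ → S ξ η → S η η') :
    ∀ k : ℕ, ∀ ξ η : H, ‖ξ‖ = 1 → ‖η‖ = 1 → S ξ η →
      ((1:ℝ)/2) ^ k ≤ 1 - ⟪ξ, η⟫ ^ 2 →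
      ∃ ξ₁ η₁ : H, ‖ξ₁‖ = 1 ∧ ‖η₁‖ = 1 ∧ S ξ₁ η₁ ∧ ⟪ξ₁, η₁⟫ = 0 := by
  intro k
  induction k with
  | zero =>
    intro ξ η hξ hη hSξη hk
    norm_num at hk
    obtain ⟨η', hη'1, hη'2, hη'3⟩ := step_exists hdim ξ η hξ hη 0
      (by nlinarith) (by norm_num)
    exact ⟨η, η', hη, hη'1, hS ξ η η' hξ hη hη'1 hη'2.symm hSξη, hη'3⟩
  | succ k ih =>
    intro ξ η hξ hη hSξη hk
    set t : ℝ := ⟪ξ, η⟫ with ht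
    by_cases hhalf : t ^ 2 ≤ 1/2
    · obtain ⟨η', hη'1, hη'2, hη'3⟩ := step_exists hdim ξ η hξ hη 0
        (by nlinarith) (by norm_num)
      exact ⟨η, η', hη, hη'1, hS ξ η η' hξ hη hη'1 hη'2.symm hSξη, hη'3⟩
    · push_neg at hhalf
      have ht1 : t ^ 2 ≤ 1 := by
        have hk' : (0:ℝ) < ((1:ℝ)/2) ^ (k+1) := by positivity
        linarith
      set s : ℝ := Real.sqrt (2 * t ^ 2 - 1) with hs
      have harg : (0:ℝ) ≤ 2 * t ^ 2 - 1 := by linarith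
      have hs2 : s ^ 2 = 2 * t ^ 2 - 1 := Real.sq_sqrt harg
      have hsle1 : s ≤ 1 := by
        rw [hs]; exact Real.sqrt_le_one.mpr (by linarith)
      have hsge : 2 * t ^ 2 - 1 ≤ s := by
        nlinarith [Real.sqrt_nonneg (2 * t ^ 2 - 1), hs2, hsle1]
      obtain ⟨η', hη'1, hη'2, hη'3⟩ := step_exists hdim ξ η hξ hη s hsge hsle1
      have hSηη' : S η η' := hS ξ η η' hξ hη hη'1 hη'2.symm hSξη
      apply ih η η' hη hη'1 hSηη'
      rw [hη'3, hs2]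
      have h2 : ((1:ℝ)/2) ^ k = 2 * ((1:ℝ)/2) ^ (k+1) := by ring
      rw [h2]
      linarith
end Aux

theorem exists_orthogonal_pair_of_closed_relation
    {H : Type*} [NormedAddCommGroup H] [InnerProductSpace ℝ H]
    (hdim : 3 ≤ Module.rank ℝ H)
    (S : H → H → Prop)
    (hS : ∀ ξ η η' : H, ‖ξ‖ = 1 → ‖η‖ = 1 → ‖η'‖ = 1 →
      ⟪ξ, η⟫ = ⟪ξ, η'⟫ → S ξ η → S η η')
    (h : ∃ ξ η : H, ‖ξ‖ = 1 ∧ ‖η‖ = 1 ∧ S ξ η ∧ η ≠ ξ ∧ η ≠ -ξ) :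
    ∃ ξ₁ η₁ : H, ‖ξ₁‖ = 1 ∧ ‖η₁‖ = 1 ∧ S ξ₁ η₁ ∧ ⟪ξ₁, η₁⟫ = 0 := by
  obtain ⟨ξ, η, hξ, hη, hSξη, hne1, hne2⟩ := h
  set t : ℝ := ⟪ξ, η⟫ with ht
  have htle : |t| ≤ 1 := by
    have := abs_real_inner_le_norm ξ η
    rwa [hξ, hη, one_mul] at this
  have htne1 : t ≠ 1 := by
    intro hcon
    exact hne1 ((inner_eq_one_iff_of_norm_eq_one hξ hη).mp (by rw [← ht, hcon])).symm
  have htne2 : t ≠ -1 := by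
    intro hcon
    apply hne2
    have hnegη : ‖(-η : H)‖ = 1 := by rwa [norm_neg]
    have h1 : ⟪ξ, (-η : H)⟫ = 1 := by
      rw [inner_neg_right, ← ht, hcon]; norm_num
    have h2 := (inner_eq_one_iff_of_norm_eq_one hξ hnegη).mp h1
    rw [← neg_eq_iff_eq_neg] at h2
    rw [← h2]
  have ht2 : t ^ 2 < 1 := by
    rcases lt_or_eq_of_le htle with h' | h'
    · nlinarith [sq_abs t, abs_nonneg t]
    · rcases (abs_eq (by norm_num : (0:ℝ) ≤ 1)).mp h' with h'' | h''
      · exact absurd h'' htne1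
      · exact absurd h'' htne2
  have hpos : (0:ℝ) < 1 - t ^ 2 := by linarith
  obtain ⟨k, hk⟩ := exists_pow_lt_of_lt_one hpos (by norm_num : (1:ℝ)/2 < 1)
  exact key_induction hdim S hS k ξ η hξ hη hSξη (le_of_lt hk)
end
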